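/- If the Lagrangian L is bounded from below on its domain, then for each i ∈ {1,2} the dual variables satisfy γ_i·α_i^G ≥ μ_i, β_E·μ_ī ≤ μ_i, and β_B·λ_ī ≤ λ_i (where ī denotes the other index). Equivalently, if any of these inequalities fails for some i, then L is unbounded from below. -/

import Mathlib

/-!
The Lagrangian is affine in each of `G_i`, `e_i`, `w_i`, which range over `[0, ∞)`, with slopes
`γ_i·α_i^G − μ_i`, `μ_i − β_E·μ_ī` and `λ_i − β_B·λ_ī`. Moving one of them along a ray from a
feasible point (`E = 0`, all `b_k = 1`) shows that a negative slope would make `L` unbounded below.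
-/

/-- The Lagrangian of the weighted sum-cost problem (P1.1). -/
noncomputable def P1Lagrangian {ι : Type*} [DecidableEq ι] (K : Fin 2 → Finset ι) (g r : ι → ℝ)
    (W Pc γ αE αG μ lam : Fin 2 → ℝ) (N₀ βE βB : ℝ)
    (E G e w : Fin 2 → ℝ) (b : ι → ℝ) : ℝ :=
  (∑ i, E i * (γ i * αE i - μ i)) + (∑ i, G i * (γ i * αG i - μ i)) +
  (∑ i, lam i * ∑ k ∈ K i, b k) +
  (∑ i, μ i * ∑ k ∈ K i, (b k * N₀ / g k) * ((2 : ℝ) ^ (r k / b k) - 1)) -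
  (∑ i, lam i * W i) + (∑ i, μ i * Pc i) +
  (∑ i, w i * (lam i - βB * lam (1 - i))) +
  (∑ i, e i * (μ i - βE * μ (1 - i)))

theorem nonneg_of_forall_le_add_mul {𝕜 : Type*} [Field 𝕜] [LinearOrder 𝕜]
    [IsStrictOrderedRing 𝕜] {m a c : 𝕜} (h : ∀ t : 𝕜, 0 ≤ t → m ≤ a + t * c) :
    0 ≤ c := by
  by_contra! hc
  have key := h ((a - m + 1) / -c) (div_nonneg (by linarith [h 0 le_rfl]) (by linarith))
  rw [div_mul_eq_mul_div, div_neg, mul_div_assoc, div_self hc.ne, mul_one] at key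
  linarith

theorem Fintype.sum_pi_single_mul {ι R : Type*} [Fintype ι] [DecidableEq ι]
    [NonUnitalNonAssocSemiring R] (i : ι) (t : R) (f : ι → R) :
    ∑ j, (Pi.single i t : ι → R) j * f j = t * f i := by
  simp [Pi.single_apply]

section Lagrangian

variable {ι : Type*} [DecidableEq ι] (K : Fin 2 → Finset ι) (g r : ι → ℝ)
    (W Pc γ αE αG μ lam : Fin 2 → ℝ) (N₀ βE βB : ℝ)
    (E G e w : Fin 2 → ℝ) (b : ι → ℝ) (i : Fin 2) (t : ℝ)

theorem P1Lagrangian_single_G :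
    P1Lagrangian K g r W Pc γ αE αG μ lam N₀ βE βB E (Pi.single i t) e w b =
      P1Lagrangian K g r W Pc γ αE αG μ lam N₀ βE βB E 0 e w b + t * (γ i * αG i - μ i) := by
  simp only [P1Lagrangian, Fintype.sum_pi_single_mul, Pi.zero_apply, zero_mul,
    Finset.sum_const_zero]
  ring

theorem P1Lagrangian_single_e :
    P1Lagrangian K g r W Pc γ αE αG μ lam N₀ βE βB E G (Pi.single i t) w b =
      P1Lagrangian K g r W Pc γ αE αG μ lam N₀ βE βB E G 0 w b + t * (μ i - βE * μ (1 - i)) := by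
  simp only [P1Lagrangian, Fintype.sum_pi_single_mul, Pi.zero_apply, zero_mul,
    Finset.sum_const_zero]
  ring

theorem P1Lagrangian_single_w :
    P1Lagrangian K g r W Pc γ αE αG μ lam N₀ βE βB E G e (Pi.single i t) b =
      P1Lagrangian K g r W Pc γ αE αG μ lam N₀ βE βB E G e 0 b +
        t * (lam i - βB * lam (1 - i)) := by
  simp only [P1Lagrangian, Fintype.sum_pi_single_mul, Pi.zero_apply, zero_mul,
    Finset.sum_const_zero]
  ring

end Lagrangian

theorem lagrangian_bounded_below_imp_dual_feasible_general {ι : Type*} [DecidableEq ι]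
    (K : Fin 2 → Finset ι)
    (g r : ι → ℝ)
    (W Pc Ebar γ αE αG μ lam : Fin 2 → ℝ)
    (hEbar : ∀ i, 0 ≤ Ebar i)
    (N₀ βE βB : ℝ)
    (hbdd : ∃ m : ℝ, ∀ (E G e w : Fin 2 → ℝ) (b : ι → ℝ),
      (∀ i, 0 ≤ E i) → (∀ i, E i ≤ Ebar i) → (∀ i, 0 ≤ G i) →
      (∀ i, 0 ≤ e i) → (∀ i, 0 ≤ w i) → (∀ k ∈ K 0 ∪ K 1, 0 < b k) →
        m ≤ P1Lagrangian K g r W Pc γ αE αG μ lam N₀ βE βB E G e w b) :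
    ∀ i : Fin 2, μ i ≤ γ i * αG i ∧ βE * μ (1 - i) ≤ μ i ∧ βB * lam (1 - i) ≤ lam i := by
  obtain ⟨m, hm⟩ := hbdd
  have feasible (G e w : Fin 2 → ℝ) (hG : 0 ≤ G) (he : 0 ≤ e) (hw : 0 ≤ w) :
      m ≤ P1Lagrangian K g r W Pc γ αE αG μ lam N₀ βE βB 0 G e w 1 :=
    hm 0 G e w 1 (fun _ => le_rfl) hEbar hG he hw (fun _ _ => one_pos)
  intro i
  refine ⟨?_, ?_, ?_⟩ <;> rw [← sub_nonneg] <;>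
    refine nonneg_of_forall_le_add_mul (m := m)
      (a := P1Lagrangian K g r W Pc γ αE αG μ lam N₀ βE βB 0 0 0 0 1) fun t ht => ?_
  · simpa only [P1Lagrangian_single_G] using
      feasible (Pi.single i t) 0 0 (Pi.single_nonneg.2 ht) le_rfl le_rfl
  · simpa only [P1Lagrangian_single_e] using
      feasible 0 (Pi.single i t) 0 le_rfl (Pi.single_nonneg.2 ht) le_rfl
  · simpa only [P1Lagrangian_single_w] using
      feasible 0 0 (Pi.single i t) le_rfl le_rfl (Pi.single_nonneg.2 ht)

/-- If the Lagrangian is bounded from below on its domain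
(`0 ≤ E_i ≤ Ē_i`, `G_i, e_i, w_i ≥ 0`, `b_k > 0`), then for each `i`
`μ_i ≤ γ_i·α_i^G`, `β_E·μ_ī ≤ μ_i` and `β_B·λ_ī ≤ λ_i`. -/
theorem lagrangian_bounded_below_imp_dual_feasible {ι : Type*} [DecidableEq ι]
    (K : Fin 2 → Finset ι) (hK : ∀ i, (K i).Nonempty) (hdisj : Disjoint (K 0) (K 1))
    (g r : ι → ℝ) (hg : ∀ k ∈ K 0 ∪ K 1, 0 < g k) (hr : ∀ k ∈ K 0 ∪ K 1, 0 < r k)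
    (W Pc Ebar γ αE αG μ lam : Fin 2 → ℝ)
    (hW : ∀ i, 0 < W i) (hPc : ∀ i, 0 ≤ Pc i) (hEbar : ∀ i, 0 ≤ Ebar i)
    (hγ : ∀ i, 0 ≤ γ i) (hαE : ∀ i, 0 < αE i) (hαG : ∀ i, 0 < αG i)
    (hμ : ∀ i, 0 ≤ μ i) (hlam : ∀ i, 0 ≤ lam i)
    (N₀ βE βB : ℝ) (hN₀ : 0 < N₀) (hβE : βE ∈ Set.Icc (0 : ℝ) 1)
    (hβB : βB = 0 ∨ βB = 1)
    (hbdd : ∃ m : ℝ, ∀ (E G e w : Fin 2 → ℝ) (b : ι → ℝ),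
      (∀ i, 0 ≤ E i) → (∀ i, E i ≤ Ebar i) → (∀ i, 0 ≤ G i) →
      (∀ i, 0 ≤ e i) → (∀ i, 0 ≤ w i) → (∀ k ∈ K 0 ∪ K 1, 0 < b k) →
        m ≤ P1Lagrangian K g r W Pc γ αE αG μ lam N₀ βE βB E G e w b) :
    ∀ i : Fin 2, μ i ≤ γ i * αG i ∧ βE * μ (1 - i) ≤ μ i ∧ βB * lam (1 - i) ≤ lam i :=
  lagrangian_bounded_below_imp_dual_feasible_general K g r W Pc Ebar γ αE αG μ lam hEbar N₀ βE βB
    hbdd
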